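/- Let Ts, δc, L̄1, L̄2, α1, α2, M1, M2, L1, L2, B1, B2 be positive reals and fix R21 ≥ 0 and R23 ≥ 0. Define G : [0, ∞) → ℝ by G(R) = (L̄1/(Ts + δc·R))·( (2^R − 1)/α1 + 2^R·(2^{R21} − 1)/α2 ) + (1/(Ts + δc·R23))·( L̄2 − ((Ts + δc·R21)/(Ts + δc·R))·L̄1 )·(2^{R23} − 1)/α2 + (M1/L1²)·( B1 − L̄1·R/(Ts + δc·R) )³ + (M2/L2²)·( B2 − ( L̄2·R23·(Ts + δc·R) + L̄1·Ts·(R21 − R23) ) / ( (Ts + δc·R)·(Ts + δc·R23) ) )³. Then G is quasiconvex on every convex subset I of [0, ∞) on which both cube arguments, B1 − L̄1·R/(Ts + δc·R) and B2 − ( L̄2·R23·(Ts + δc·R) + L̄1·Ts·(R21 − R23) ) / ( (Ts + δc·R)·(Ts + δc·R23) ), are nonnegative for all R ∈ I. (Appendix F: the partial-offloading objective is quasiconvex in R11 when R21 and R23 are fixed.) -/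

import Mathlib

/-!
Writing `s = Ts + δc R`, every term of `G` differentiates to a multiple of `1 / s²`, so
`G' = H / s²` for an explicit `H` (`derivNumG`). Differentiating once more, the term
`-Lb1 δc (P11 + P21)` of `H` cancels against the derivative of `s`, and what is left is
`Lb1 ln²2 2^R (1/α1 + (2^R21 - 1)/α2) s` plus two terms `6 (Mk/Lk²) Fk (·)² / s²`, where the
`Fk` are the two cube arguments. Hence `H` is nondecreasing wherever the cube arguments are
nonnegative, so `G'` changes sign at most once on `I`, from `-` to `+`: `G` first decreases and
then increases, which is quasiconvexity.
-/

/-- The partial-offloading objective (Case α1 ≤ α2) as a function of user 1's first-slot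
rate R = R11, with R21 and R23 fixed. -/
noncomputable def G (Ts δc Lb1 Lb2 α1 α2 M1 M2 L1 L2 B1 B2 R21 R23 R : ℝ) : ℝ :=
  (Lb1 / (Ts + δc * R)) *
      (((2 : ℝ) ^ R - 1) / α1 + (2 : ℝ) ^ R * ((2 : ℝ) ^ R21 - 1) / α2) +
    (1 / (Ts + δc * R23)) * (Lb2 - ((Ts + δc * R21) / (Ts + δc * R)) * Lb1) *
      (((2 : ℝ) ^ R23 - 1) / α2) +
    (M1 / L1 ^ 2) * (B1 - Lb1 * R / (Ts + δc * R)) ^ 3 +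
    (M2 / L2 ^ 2) * (B2 - (Lb2 * R23 * (Ts + δc * R) + Lb1 * Ts * (R21 - R23)) /
      ((Ts + δc * R) * (Ts + δc * R23))) ^ 3

open Real Set

section

variable {f f' H : ℝ → ℝ} {D : Set ℝ}

theorem monotoneOn_of_hasDerivAt_nonneg (hD : Convex ℝ D)
    (hf : ∀ x ∈ D, HasDerivAt f (f' x) x)
    (hf' : ∀ x ∈ D, 0 ≤ f' x) : MonotoneOn f D :=
  monotoneOn_of_hasDerivWithinAt_nonneg hD
    (fun x hx ↦ (hf x hx).continuousAt.continuousWithinAt)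
    (fun x hx ↦ (hf x (interior_subset hx)).hasDerivWithinAt)
    fun x hx ↦ hf' x (interior_subset hx)

theorem antitoneOn_of_hasDerivAt_nonpos (hD : Convex ℝ D)
    (hf : ∀ x ∈ D, HasDerivAt f (f' x) x)
    (hf' : ∀ x ∈ D, f' x ≤ 0) : AntitoneOn f D :=
  antitoneOn_of_hasDerivWithinAt_nonpos hD
    (fun x hx ↦ (hf x hx).continuousAt.continuousWithinAt)
    (fun x hx ↦ (hf x (interior_subset hx)).hasDerivWithinAt)
    fun x hx ↦ hf' x (interior_subset hx)

theorem quasiconvexOn_of_hasDerivAt_of_monotoneOn (hD : Convex ℝ D)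
    (hf : ∀ x ∈ D, HasDerivAt f (f' x) x) (hH : MonotoneOn H D)
    (hneg : ∀ x ∈ D, H x ≤ 0 → f' x ≤ 0) (hpos : ∀ x ∈ D, 0 ≤ H x → 0 ≤ f' x) :
    QuasiconvexOn ℝ D f := by
  refine fun r ↦ convex_iff_ordConnected.2 ⟨fun x hx y hy z hz ↦ ?_⟩
  have hxyD : Icc x y ⊆ D := hD.ordConnected.out hx.1 hy.1
  refine ⟨hxyD hz, ?_⟩
  rcases le_total (H z) 0 with hHz | hHz
  · have hxzD : Icc x z ⊆ D := (Icc_subset_Icc_right hz.2).trans hxyD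
    have hanti : AntitoneOn f (Icc x z) := antitoneOn_of_hasDerivAt_nonpos (convex_Icc x z)
      (fun t ht ↦ hf t (hxzD ht))
      (fun t ht ↦ hneg t (hxzD ht) ((hH (hxzD ht) (hxyD hz) ht.2).trans hHz))
    exact (hanti (left_mem_Icc.2 hz.1) (right_mem_Icc.2 hz.1) hz.1).trans hx.2
  · have hzyD : Icc z y ⊆ D := (Icc_subset_Icc_left hz.1).trans hxyD
    have hmono : MonotoneOn f (Icc z y) := monotoneOn_of_hasDerivAt_nonneg (convex_Icc z y)
      (fun t ht ↦ hf t (hzyD ht))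
      (fun t ht ↦ hpos t (hzyD ht) (hHz.trans (hH (hxyD hz) (hzyD ht) ht.1)))
    exact (hmono (left_mem_Icc.2 hz.2) (right_mem_Icc.2 hz.2) hz.2).trans hy.2

end

theorem hasDerivAt_affine (a b t : ℝ) : HasDerivAt (fun R ↦ a + b * R) b t := by
  simpa using ((hasDerivAt_id t).const_mul b).const_add a

section

variable {a b t : ℝ}

theorem hasDerivAt_const_sub_div_affine_mul (c w k : ℝ) (hs : a + b * t ≠ 0) :
    HasDerivAt (fun R ↦ c - w / (a + b * R) * k) (w * b * k / (a + b * t) ^ 2) t := by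
  refine ((((hasDerivAt_const t w).div (hasDerivAt_affine a b t) hs).mul_const k).const_sub
    c).congr_deriv ?_
  field_simp
  ring

theorem hasDerivAt_div_affine_mul {g : ℝ → ℝ} {g' : ℝ} (c : ℝ) (hg : HasDerivAt g g' t)
    (hs : a + b * t ≠ 0) :
    HasDerivAt (fun R ↦ c / (a + b * R) * g R)
      (c * (g' * (a + b * t) - b * g t) / (a + b * t) ^ 2) t := by
  refine (((hasDerivAt_const t c).div (hasDerivAt_affine a b t) hs).mul hg).congr_deriv ?_
  simp only [Pi.div_apply]
  field_simp
  ring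

theorem hasDerivAt_const_sub_mul_div_affine (B c : ℝ) (hs : a + b * t ≠ 0) :
    HasDerivAt (fun R ↦ B - c * R / (a + b * R)) (-(c * a) / (a + b * t) ^ 2) t := by
  refine ((((hasDerivAt_id' t).const_mul c).div (hasDerivAt_affine a b t) hs).const_sub
    B).congr_deriv ?_
  field_simp
  ring

theorem hasDerivAt_const_sub_affine_div_affine_mul (B p q e : ℝ) (hs : a + b * t ≠ 0)
    (he : e ≠ 0) :
    HasDerivAt (fun R ↦ B - (p * (a + b * R) + q) / ((a + b * R) * e))
      (b * (q / e) / (a + b * t) ^ 2) t := by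
  have hs' := hasDerivAt_affine a b t
  refine ((((hs'.const_mul p).add_const q).div (hs'.mul_const e) (mul_ne_zero hs he)).const_sub
    B).congr_deriv ?_
  field_simp
  ring

end

-- `P11 + P21` as a function of `R = R11`, with `q = 2 ^ R21 - 1`.
theorem hasDerivAt_firstSlotPower (α1 α2 q t : ℝ) :
    HasDerivAt (fun R ↦ ((2 : ℝ) ^ R - 1) / α1 + (2 : ℝ) ^ R * q / α2)
      (log 2 * (2 : ℝ) ^ t * (1 / α1 + q / α2)) t := by
  have hpow := (hasStrictDerivAt_const_rpow two_pos t).hasDerivAt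
  refine (((hpow.sub_const 1).div_const α1).add ((hpow.mul_const q).div_const α2)).congr_deriv ?_
  ring

noncomputable def derivNumG (Ts δc Lb1 Lb2 α1 α2 M1 M2 L1 L2 B1 B2 R21 R23 t : ℝ) : ℝ :=
  Lb1 * (log 2 * (2 : ℝ) ^ t * (1 / α1 + ((2 : ℝ) ^ R21 - 1) / α2) * (Ts + δc * t)
        - δc * (((2 : ℝ) ^ t - 1) / α1 + (2 : ℝ) ^ t * ((2 : ℝ) ^ R21 - 1) / α2))
  + (Ts + δc * R21) * Lb1 * (((2 : ℝ) ^ R23 - 1) / α2) / (Ts + δc * R23) * δc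
  - 3 * (M1 / L1 ^ 2) * (B1 - Lb1 * t / (Ts + δc * t)) ^ 2 * (Lb1 * Ts)
  + 3 * (M2 / L2 ^ 2) * (B2 - (Lb2 * R23 * (Ts + δc * t) + Lb1 * Ts * (R21 - R23)) /
      ((Ts + δc * t) * (Ts + δc * R23))) ^ 2 *
    (δc * (Lb1 * Ts * (R21 - R23) / (Ts + δc * R23)))

section

variable {Ts δc Lb1 Lb2 α1 α2 M1 M2 L1 L2 B1 B2 R21 R23 t : ℝ}

theorem hasDerivAt_G (hs : Ts + δc * t ≠ 0) (he : Ts + δc * R23 ≠ 0) :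
    HasDerivAt (G Ts δc Lb1 Lb2 α1 α2 M1 M2 L1 L2 B1 B2 R21 R23)
      (derivNumG Ts δc Lb1 Lb2 α1 α2 M1 M2 L1 L2 B1 B2 R21 R23 t / (Ts + δc * t) ^ 2) t := by
  have h1 :=
    hasDerivAt_div_affine_mul Lb1 (hasDerivAt_firstSlotPower α1 α2 ((2 : ℝ) ^ R21 - 1) t) hs
  have h2 := ((hasDerivAt_const_sub_div_affine_mul Lb2 (Ts + δc * R21) Lb1 hs).const_mul
    (1 / (Ts + δc * R23))).mul_const (((2 : ℝ) ^ R23 - 1) / α2)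
  have h3 := ((hasDerivAt_const_sub_mul_div_affine B1 Lb1 hs).pow 3).const_mul (M1 / L1 ^ 2)
  have h4 := ((hasDerivAt_const_sub_affine_div_affine_mul B2 (Lb2 * R23)
    (Lb1 * Ts * (R21 - R23)) (Ts + δc * R23) hs he).pow 3).const_mul (M2 / L2 ^ 2)
  refine (((h1.add h2).add h3).add h4).congr_deriv ?_
  unfold derivNumG
  ring

theorem hasDerivAt_derivNumG (hs : Ts + δc * t ≠ 0) (he : Ts + δc * R23 ≠ 0) :
    HasDerivAt (derivNumG Ts δc Lb1 Lb2 α1 α2 M1 M2 L1 L2 B1 B2 R21 R23)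
      (Lb1 * (log 2 ^ 2 * (2 : ℝ) ^ t * (1 / α1 + ((2 : ℝ) ^ R21 - 1) / α2) * (Ts + δc * t))
        + 6 * (M1 / L1 ^ 2) * (B1 - Lb1 * t / (Ts + δc * t)) * (Lb1 * Ts) ^ 2 /
          (Ts + δc * t) ^ 2
        + 6 * (M2 / L2 ^ 2) * (B2 - (Lb2 * R23 * (Ts + δc * t) + Lb1 * Ts * (R21 - R23)) /
            ((Ts + δc * t) * (Ts + δc * R23)))
          * (δc * (Lb1 * Ts * (R21 - R23) / (Ts + δc * R23))) ^ 2 / (Ts + δc * t) ^ 2) t := by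
  have hpow := (hasStrictDerivAt_const_rpow two_pos t).hasDerivAt
  have h1 := ((((hpow.const_mul (log 2)).mul_const (1 / α1 + ((2 : ℝ) ^ R21 - 1) / α2)).mul
    (hasDerivAt_affine Ts δc t)).sub
    ((hasDerivAt_firstSlotPower α1 α2 ((2 : ℝ) ^ R21 - 1) t).const_mul δc)).const_mul Lb1
  have h3 := (((hasDerivAt_const_sub_mul_div_affine B1 Lb1 hs).pow 2).const_mul
    (3 * (M1 / L1 ^ 2))).mul_const (Lb1 * Ts)
  have h4 := (((hasDerivAt_const_sub_affine_div_affine_mul B2 (Lb2 * R23)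
    (Lb1 * Ts * (R21 - R23)) (Ts + δc * R23) hs he).pow 2).const_mul (3 * (M2 / L2 ^ 2))).mul_const
    (δc * (Lb1 * Ts * (R21 - R23) / (Ts + δc * R23)))
  unfold derivNumG
  refine (((h1.add_const _).sub h3).add h4).congr_deriv ?_
  ring

theorem monotoneOn_derivNumG {I : Set ℝ} (hI : Convex ℝ I) (hs : ∀ t ∈ I, 0 < Ts + δc * t)
    (he : Ts + δc * R23 ≠ 0) (hLb1 : 0 ≤ Lb1) (hα1 : 0 ≤ α1) (hα2 : 0 ≤ α2) (hM1 : 0 ≤ M1)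
    (hM2 : 0 ≤ M2) (hR21 : 0 ≤ R21)
    (hcube : ∀ R ∈ I,
        0 ≤ B1 - Lb1 * R / (Ts + δc * R) ∧
        0 ≤ B2 - (Lb2 * R23 * (Ts + δc * R) + Lb1 * Ts * (R21 - R23)) /
          ((Ts + δc * R) * (Ts + δc * R23))) :
    MonotoneOn (derivNumG Ts δc Lb1 Lb2 α1 α2 M1 M2 L1 L2 B1 B2 R21 R23) I := by
  refine monotoneOn_of_hasDerivAt_nonneg hI
    (fun t ht ↦ hasDerivAt_derivNumG (hs t ht).ne' he) fun t ht ↦ ?_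
  have hc : 0 ≤ 1 / α1 + ((2 : ℝ) ^ R21 - 1) / α2 :=
    add_nonneg (by positivity) (div_nonneg (sub_nonneg.2 (one_le_rpow one_le_two hR21)) hα2)
  have hst := hs t ht
  obtain ⟨h1, h2⟩ := hcube t ht
  positivity

end

theorem partial_objective_quasiconvex_general
    (Ts δc Lb1 Lb2 α1 α2 M1 M2 L1 L2 B1 B2 R21 R23 : ℝ)
    (hTs : 0 < Ts) (hδc : 0 < δc) (hLb1 : 0 < Lb1)
    (hα1 : 0 < α1) (hα2 : 0 < α2) (hM1 : 0 < M1) (hM2 : 0 < M2)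
    (hR21 : 0 ≤ R21) (hR23 : 0 ≤ R23) :
    ∀ I : Set ℝ, I ⊆ Set.Ici (0 : ℝ) → Convex ℝ I →
      (∀ R ∈ I,
        0 ≤ B1 - Lb1 * R / (Ts + δc * R) ∧
        0 ≤ B2 - (Lb2 * R23 * (Ts + δc * R) + Lb1 * Ts * (R21 - R23)) /
          ((Ts + δc * R) * (Ts + δc * R23))) →
      QuasiconvexOn ℝ I (fun R => G Ts δc Lb1 Lb2 α1 α2 M1 M2 L1 L2 B1 B2 R21 R23 R) := by
  intro I hI0 hI hcube
  have hs : ∀ t ∈ I, 0 < Ts + δc * t := fun t ht ↦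
    add_pos_of_pos_of_nonneg hTs (mul_nonneg hδc.le (hI0 ht))
  have he : Ts + δc * R23 ≠ 0 := by positivity
  exact quasiconvexOn_of_hasDerivAt_of_monotoneOn hI (fun t ht ↦ hasDerivAt_G (hs t ht).ne' he)
    (monotoneOn_derivNumG hI hs he hLb1.le hα1.le hα2.le hM1.le hM2.le hR21 hcube)
    (fun _ _ h ↦ div_nonpos_of_nonpos_of_nonneg h (sq_nonneg _))
    fun _ _ h ↦ div_nonneg h (sq_nonneg _)

/-- Appendix F: the partial-offloading objective is quasiconvex in R11 when R21 and R23 are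
fixed, on any convex subset of [0, ∞) where both cube arguments are nonnegative. -/
theorem partial_objective_quasiconvex
    (Ts δc Lb1 Lb2 α1 α2 M1 M2 L1 L2 B1 B2 R21 R23 : ℝ)
    (hTs : 0 < Ts) (hδc : 0 < δc) (hLb1 : 0 < Lb1) (hLb2 : 0 < Lb2)
    (hα1 : 0 < α1) (hα2 : 0 < α2) (hM1 : 0 < M1) (hM2 : 0 < M2)
    (hL1 : 0 < L1) (hL2 : 0 < L2) (hB1 : 0 < B1) (hB2 : 0 < B2)
    (hR21 : 0 ≤ R21) (hR23 : 0 ≤ R23) :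
    ∀ I : Set ℝ, I ⊆ Set.Ici (0 : ℝ) → Convex ℝ I →
      (∀ R ∈ I,
        0 ≤ B1 - Lb1 * R / (Ts + δc * R) ∧
        0 ≤ B2 - (Lb2 * R23 * (Ts + δc * R) + Lb1 * Ts * (R21 - R23)) /
          ((Ts + δc * R) * (Ts + δc * R23))) →
      QuasiconvexOn ℝ I (fun R => G Ts δc Lb1 Lb2 α1 α2 M1 M2 L1 L2 B1 B2 R21 R23 R) :=
  partial_objective_quasiconvex_general Ts δc Lb1 Lb2 α1 α2 M1 M2 L1 L2 B1 B2 R21 R23 hTs hδc hLb1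
    hα1 hα2 hM1 hM2 hR21 hR23
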